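/- arXiv:2101.06398 — 4 statements merged into one kernel-verified Lean document; each statement's English description precedes it below -/
import Mathlib

section
/- Let Z₁,…,Z_L be positive definite matrices and A a positive semi-definite matrix, and let Φ₁,…,Φ_L be matrices with Σ_l Φ_l = I. Then -tr((Σ_l Z_l)⁻¹ A) ≥ -Σ_l tr(Z_l⁻¹ Φ_l A Φ_lᴴ), with equality when Φ_k = Z_k (Σ_l Z_l)⁻¹ for all k. -/
/-!
Put `S = ∑ l, Z l` and `D l = Φ l - Z l * S⁻¹`. Expanding and using `∑ l, Φ l = 1` gives the
completing-the-square identity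
`∑ l, tr (Z l⁻¹ Φ l A Φ lᴴ) = tr (S⁻¹ A) + ∑ l, tr (Z l⁻¹ D l A D lᴴ)`,
and each remainder term is the trace of a product of the positive semidefinite matrices
`D lᴴ Z l⁻¹ D l` and `A`, hence nonnegative; it vanishes when every `D l` does.
-/

open Matrix ComplexOrder

namespace Matrix

variable {n ι 𝕜 : Type*} [RCLike 𝕜] [Fintype n] [DecidableEq n] [Fintype ι]

lemma PosSemidef.trace_mul_nonneg {P A : Matrix n n 𝕜} (hP : P.PosSemidef) (hA : A.PosSemidef) :
    0 ≤ (P * A).trace := by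
  open scoped MatrixOrder in
  obtain ⟨R, hR, hRR⟩ : ∃ R : Matrix n n 𝕜, R.PosSemidef ∧ R * R = A :=
    ⟨CFC.sqrt A, (CFC.sqrt_nonneg A).posSemidef, CFC.sqrt_mul_sqrt_self A hA.nonneg⟩
  have hRPR : (R * P * R).PosSemidef := by
    simpa only [hR.isHermitian.eq] using hP.conjTranspose_mul_mul_same R
  rw [← hRR, ← Matrix.mul_assoc, trace_mul_cycle]
  exact hRPR.trace_nonneg

lemma posDef_sum_of_sum_eq_one {Z Φ : ι → Matrix n n 𝕜} (hZ : ∀ l, (Z l).PosDef)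
    (hΦ : ∑ l, Φ l = 1) : (∑ l, Z l).PosDef := by
  rcases isEmpty_or_nonempty ι with _ | _
  · have : Subsingleton (Matrix n n 𝕜) :=
      subsingleton_of_zero_eq_one (by simpa using hΦ)
    rw [Subsingleton.elim (∑ l, Z l) 1]
    exact PosDef.one
  · exact posDef_sum Finset.univ_nonempty fun l _ => hZ l

lemma trace_inv_mul_sub_mul_conjTranspose {Z Φ A T : Matrix n n 𝕜} (hZ : Z.IsHermitian)
    (hZu : IsUnit Z.det) :
    (Z⁻¹ * (Φ - Z * T) * A * (Φ - Z * T)ᴴ).trace =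
      (Z⁻¹ * Φ * A * Φᴴ).trace - (T * A * Φᴴ).trace - (Φ * A * Tᴴ).trace +
        (T * A * Tᴴ * Z).trace := by
  have hcyc : (Z⁻¹ * Φ * A * Tᴴ * Z).trace = (Φ * A * Tᴴ).trace := by
    rw [trace_mul_comm]
    simp only [Matrix.mul_assoc, mul_nonsing_inv_cancel_left _ _ hZu]
  rw [Matrix.mul_sub, nonsing_inv_mul_cancel_left _ _ hZu, conjTranspose_sub,
    conjTranspose_mul, hZ.eq]
  simp only [Matrix.sub_mul, Matrix.mul_sub, trace_sub, hcyc, ← Matrix.mul_assoc]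
  ring

theorem sum_trace_inv_mul_mul_conjTranspose_eq {Z Φ : ι → Matrix n n 𝕜} (A : Matrix n n 𝕜)
    (hZ : ∀ l, (Z l).IsHermitian) (hZu : ∀ l, IsUnit (Z l).det)
    (hSu : IsUnit (∑ l, Z l).det) (hΦ : ∑ l, Φ l = 1) :
    ∑ l, ((Z l)⁻¹ * Φ l * A * (Φ l)ᴴ).trace =
      ((∑ l, Z l)⁻¹ * A).trace +
        ∑ l, ((Z l)⁻¹ * (Φ l - Z l * (∑ l, Z l)⁻¹) * A *
          (Φ l - Z l * (∑ l, Z l)⁻¹)ᴴ).trace := by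
  set S := ∑ l, Z l with hS
  have hSH : (S⁻¹)ᴴ = S⁻¹ :=
    IsHermitian.inv (isSelfAdjoint_sum Finset.univ fun l _ => hZ l) |>.eq
  have h₁ : ∑ l, (S⁻¹ * A * (Φ l)ᴴ).trace = (S⁻¹ * A).trace := by
    rw [← trace_sum, ← Finset.mul_sum, ← conjTranspose_sum, hΦ, conjTranspose_one,
      Matrix.mul_one]
  have h₂ : ∑ l, (Φ l * A * (S⁻¹)ᴴ).trace = (S⁻¹ * A).trace := by
    rw [← trace_sum, ← Finset.sum_mul, ← Finset.sum_mul, hΦ, Matrix.one_mul, hSH,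
      trace_mul_comm]
  have h₃ : ∑ l, (S⁻¹ * A * (S⁻¹)ᴴ * Z l).trace = (S⁻¹ * A).trace := by
    rw [← trace_sum, ← Finset.mul_sum, ← hS, hSH, Matrix.mul_assoc,
      Matrix.nonsing_inv_mul _ hSu, Matrix.mul_one]
  simp only [trace_inv_mul_sub_mul_conjTranspose (hZ _) (hZu _), Finset.sum_add_distrib,
    Finset.sum_sub_distrib, h₁, h₂, h₃]
  ring

theorem trace_inv_sum_mul_le_sum_trace {Z Φ : ι → Matrix n n 𝕜} {A : Matrix n n 𝕜}
    (hZ : ∀ l, (Z l).PosDef) (hA : A.PosSemidef) (hΦ : ∑ l, Φ l = 1) :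
    ((∑ l, Z l)⁻¹ * A).trace ≤ ∑ l, ((Z l)⁻¹ * Φ l * A * (Φ l)ᴴ).trace := by
  have hSu := (posDef_sum_of_sum_eq_one hZ hΦ).det_pos.ne'.isUnit
  rw [sum_trace_inv_mul_mul_conjTranspose_eq A (fun l => (hZ l).isHermitian)
    (fun l => (hZ l).det_pos.ne'.isUnit) hSu hΦ]
  refine le_add_of_nonneg_right (Finset.sum_nonneg fun l _ => ?_)
  set D := Φ l - Z l * (∑ l, Z l)⁻¹
  have hcyc : ((Z l)⁻¹ * D * A * Dᴴ).trace = (Dᴴ * (Z l)⁻¹ * D * A).trace := by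
    rw [trace_mul_comm]
    simp only [Matrix.mul_assoc]
  rw [hcyc]
  exact ((hZ l).inv.posSemidef.conjTranspose_mul_mul_same D).trace_mul_nonneg hA

theorem trace_inv_sum_mul_eq_sum_trace {Z Φ : ι → Matrix n n 𝕜} (A : Matrix n n 𝕜)
    (hZ : ∀ l, (Z l).IsHermitian) (hZu : ∀ l, IsUnit (Z l).det)
    (hSu : IsUnit (∑ l, Z l).det) (hΦ : ∀ l, Φ l = Z l * (∑ l, Z l)⁻¹) :
    ((∑ l, Z l)⁻¹ * A).trace = ∑ l, ((Z l)⁻¹ * Φ l * A * (Φ l)ᴴ).trace := by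
  have hΦ₁ : ∑ l, Φ l = 1 := by
    simp_rw [hΦ, ← Finset.sum_mul, mul_nonsing_inv _ hSu]
  rw [sum_trace_inv_mul_mul_conjTranspose_eq A hZ hZu hSu hΦ₁]
  simp [hΦ]

end Matrix

theorem stmt_1 (M L : ℕ) (Z : Fin L → Matrix (Fin M) (Fin M) ℂ)
    (A : Matrix (Fin M) (Fin M) ℂ) (Φ : Fin L → Matrix (Fin M) (Fin M) ℂ)
    (hZ : ∀ l, (Z l).PosDef) (hA : A.PosSemidef)
    (hΦ : ∑ l, Φ l = 1) :
    (-(((∑ l, Z l)⁻¹ * A).trace.re) ≥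
      -∑ l, ((Z l)⁻¹ * Φ l * A * (Φ l)ᴴ).trace.re) ∧
    ((∀ k, Φ k = Z k * (∑ l, Z l)⁻¹) →
      -(((∑ l, Z l)⁻¹ * A).trace.re) =
        -∑ l, ((Z l)⁻¹ * Φ l * A * (Φ l)ᴴ).trace.re) := by
  have hS := posDef_sum_of_sum_eq_one hZ hΦ
  refine ⟨?_, fun hΦZ => ?_⟩
  · rw [ge_iff_le, neg_le_neg_iff, ← Complex.re_sum]
    exact (Complex.le_def.1 (trace_inv_sum_mul_le_sum_trace hZ hA hΦ)).1
  · rw [trace_inv_sum_mul_eq_sum_trace A (fun l => (hZ l).isHermitian)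
      (fun l => (hZ l).det_pos.ne'.isUnit)
      hS.det_pos.ne'.isUnit hΦZ, Complex.re_sum]
end

section
/- For positive definite matrices A and B, the geometric mean G = A♯B = A^{1/2}(A^{-1/2}BA^{-1/2})^{1/2}A^{1/2} is the unique positive definite solution X of the Riccati equation X A⁻¹ X = B. -/
open Matrix ComplexOrder

/-!
The substitution `X = R * Y * R` with `R * R = A` turns `X * A⁻¹ * X = B` into
`Y * Y = R⁻¹ * B * R⁻¹ = T * T`, and it preserves positive definiteness since `R` is Hermitian
and invertible. Uniqueness then reduces to the uniqueness of positive semidefinite square roots.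
-/

namespace Matrix

variable {n : Type*} [Fintype n] [DecidableEq n]

section CommRing

variable {α : Type*} [CommRing α] {R : Matrix n n α}

lemma conj_mul_inv_mul_self_mul_conj (hR : IsUnit R.det) (Y : Matrix n n α) :
    (R * Y * R) * (R * R)⁻¹ * (R * Y * R) = R * (Y * Y) * R := by
  simp [mul_inv_rev, Matrix.mul_assoc, hR]

lemma conj_conj_nonsing_inv (hR : IsUnit R.det) (Y : Matrix n n α) :
    R * (R⁻¹ * Y * R⁻¹) * R = Y := by
  simp [Matrix.mul_assoc, hR]

lemma nonsing_inv_conj_conj (hR : IsUnit R.det) (Y : Matrix n n α) :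
    R⁻¹ * (R * Y * R) * R⁻¹ = Y := by
  simp [Matrix.mul_assoc, hR]

end CommRing

variable {𝕜 : Type*} [RCLike 𝕜]

lemma PosDef.mul_mul_of_isHermitian {T R : Matrix n n 𝕜} (hT : T.PosDef) (hR : R.IsHermitian)
    (hRu : IsUnit R) : (R * T * R).PosDef := by
  simpa only [hR.eq] using hT.conjTranspose_mul_mul_same (mulVec_injective_iff_isUnit.mpr hRu)

open scoped MatrixOrder Matrix.Norms.L2Operator in
lemma PosSemidef.eq_of_mul_self_eq {A B : Matrix n n 𝕜} (hA : A.PosSemidef) (hB : B.PosSemidef)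
    (h : A * A = B * B) : A = B :=
  (CFC.sq_eq_sq_iff A B hA.nonneg hB.nonneg).mp (by simpa only [sq] using h)

end Matrix

theorem stmt_5_general (M : ℕ) (A B R T : Matrix (Fin M) (Fin M) ℂ)
    (hR : R.PosDef) (hR2 : R * R = A)
    (hT : T.PosDef) (hT2 : T * T = R⁻¹ * B * R⁻¹) :
    (R * T * R).PosDef ∧ (R * T * R) * A⁻¹ * (R * T * R) = B ∧
      ∀ X : Matrix (Fin M) (Fin M) ℂ, X.PosDef → X * A⁻¹ * X = B →
        X = R * T * R := by
  have hdet : IsUnit R.det := (isUnit_iff_isUnit_det R).mp hR.isUnit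
  subst hR2
  refine ⟨hT.mul_mul_of_isHermitian hR.isHermitian hR.isUnit, ?_, fun X hX hXB => ?_⟩
  · rw [conj_mul_inv_mul_self_mul_conj hdet, hT2, conj_conj_nonsing_inv hdet]
  · set Y := R⁻¹ * X * R⁻¹
    have hXY : X = R * Y * R := (conj_conj_nonsing_inv hdet X).symm
    have hY : Y.PosDef := hX.mul_mul_of_isHermitian hR.inv.isHermitian hR.inv.isUnit
    have hYT : Y * Y = T * T := by
      rw [hT2, ← hXB, hXY, conj_mul_inv_mul_self_mul_conj hdet, nonsing_inv_conj_conj hdet]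
    rw [hXY, hY.posSemidef.eq_of_mul_self_eq hT.posSemidef hYT]

theorem stmt_5 (M : ℕ) (A B R T : Matrix (Fin M) (Fin M) ℂ)
    (hA : A.PosDef) (hB : B.PosDef)
    (hR : R.PosDef) (hR2 : R * R = A)
    (hT : T.PosDef) (hT2 : T * T = R⁻¹ * B * R⁻¹) :
    (R * T * R).PosDef ∧ (R * T * R) * A⁻¹ * (R * T * R) = B ∧
      ∀ X : Matrix (Fin M) (Fin M) ℂ, X.PosDef → X * A⁻¹ * X = B →
        X = R * T * R :=
  stmt_5_general M A B R T hR hR2 hT hT2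
end

section
/- Let V be a real symmetric K×K matrix decomposed as V = V⁺ - V⁻ with V⁺ = max(V,0) and V⁻ = max(-V,0) entrywise, and let ŵ ∈ ℝ^K have strictly positive entries. Then for all w ∈ ℝ^K, w V wᵀ ≤ ŵ V ŵᵀ + 2(w-ŵ) V ŵᵀ + (w-ŵ) Ω(ŵ) (w-ŵ)ᵀ, where Ω(ŵ) = Diag(2(V⁺ŵ + V⁻ŵ)./ŵ) and ./ denotes entrywise division. -/
open Matrix

private lemma amgm_aux (x y a b : ℝ) (ha : 0 < a) (hb : 0 < b) :
    |x| * |y| ≤ (x ^ 2 * b / a + y ^ 2 * a / b) / 2 := by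
  rw [div_add_div _ _ ha.ne' hb.ne', div_div, le_div_iff₀ (by positivity)]
  rw [← sq_abs x, ← sq_abs y]
  nlinarith [sq_nonneg (|x| * b - |y| * a), abs_nonneg x, abs_nonneg y]

theorem stmt_10 (K : ℕ) (V : Matrix (Fin K) (Fin K) ℝ) (hV : V.IsSymm)
    (what : Fin K → ℝ) (hwhat : ∀ i, 0 < what i)
    (w : Fin K → ℝ) (hw : ∀ i, 0 ≤ w i)
    (Vp Vm : Matrix (Fin K) (Fin K) ℝ)
    (hVp : ∀ i j, Vp i j = max (V i j) 0)
    (hVm : ∀ i j, Vm i j = max (-V i j) 0)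
    (Ω : Matrix (Fin K) (Fin K) ℝ)
    (hΩ : Ω = Matrix.diagonal
      (fun i => 2 * ((Vp.mulVec what i + Vm.mulVec what i) / what i))) :
    w ⬝ᵥ V.mulVec w ≤
      what ⬝ᵥ V.mulVec what + 2 * ((w - what) ⬝ᵥ V.mulVec what) +
        (w - what) ⬝ᵥ Ω.mulVec (w - what) := by
  have hVs : ∀ i j, V i j = V j i := fun i j => hV.apply j i
  have habs : ∀ i j, Vp i j + Vm i j = |V i j| := by
    intro i j
    rw [hVp, hVm]
    rcases le_total 0 (V i j) with h | h
    · rw [max_eq_left h, max_eq_right (by linarith), abs_of_nonneg h]; ring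
    · rw [max_eq_right h, max_eq_left (by linarith), abs_of_nonpos h]; ring
  -- symmetry of the bilinear form
  have symm_dot : ∀ x y : Fin K → ℝ, x ⬝ᵥ V.mulVec y = y ⬝ᵥ V.mulVec x := by
    intro x y
    simp only [dotProduct, mulVec, dotProduct, Finset.mul_sum]
    rw [Finset.sum_comm]
    refine Finset.sum_congr rfl fun j _ => Finset.sum_congr rfl fun i _ => ?_
    rw [hVs i j]; ring
  set d : Fin K → ℝ := w - what with hd
  have expand : w ⬝ᵥ V.mulVec w =
      what ⬝ᵥ V.mulVec what + 2 * (d ⬝ᵥ V.mulVec what) + d ⬝ᵥ V.mulVec d := by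
    simp only [hd, Matrix.mulVec_sub, sub_dotProduct, dotProduct_sub]
    linarith [symm_dot what w]
  rw [expand]
  have hdd : d ⬝ᵥ V.mulVec d ≤ d ⬝ᵥ Ω.mulVec d := by
    have hdform : d ⬝ᵥ V.mulVec d = ∑ i, ∑ j, V i j * d i * d j := by
      simp only [dotProduct, mulVec, dotProduct, Finset.mul_sum]
      exact Finset.sum_congr rfl fun i _ => Finset.sum_congr rfl fun j _ => by ring
    have hstep1 : d ⬝ᵥ V.mulVec d ≤
        ∑ i, ∑ j, |V i j| * ((d i) ^ 2 * what j / what i + (d j) ^ 2 * what i / what j) / 2 := by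
      rw [hdform]
      refine Finset.sum_le_sum fun i _ => Finset.sum_le_sum fun j _ => ?_
      have h1 : V i j * d i * d j ≤ |V i j| * (|d i| * |d j|) := by
        calc V i j * d i * d j ≤ |V i j * d i * d j| := le_abs_self _
          _ = |V i j| * (|d i| * |d j|) := by rw [abs_mul, abs_mul, mul_assoc]
      calc V i j * d i * d j ≤ |V i j| * (|d i| * |d j|) := h1
        _ ≤ |V i j| * (((d i) ^ 2 * what j / what i + (d j) ^ 2 * what i / what j) / 2) := by
            exact mul_le_mul_of_nonneg_left (amgm_aux _ _ _ _ (hwhat i) (hwhat j)) (abs_nonneg _)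
        _ = |V i j| * ((d i) ^ 2 * what j / what i + (d j) ^ 2 * what i / what j) / 2 := by ring
    have hswap : ∑ i, ∑ j, |V i j| * ((d j) ^ 2 * what i / what j)
        = ∑ i, ∑ j, |V i j| * ((d i) ^ 2 * what j / what i) := by
      rw [Finset.sum_comm]
      refine Finset.sum_congr rfl fun i _ => Finset.sum_congr rfl fun j _ => ?_
      rw [hVs i j]
    have hstep2 :
        ∑ i, ∑ j, |V i j| * ((d i) ^ 2 * what j / what i + (d j) ^ 2 * what i / what j) / 2
        = ∑ i, ∑ j, |V i j| * ((d i) ^ 2 * what j / what i) := by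
      have e1 : ∀ i j : Fin K,
          |V i j| * ((d i) ^ 2 * what j / what i + (d j) ^ 2 * what i / what j) / 2
          = (|V i j| * ((d i) ^ 2 * what j / what i)
            + |V i j| * ((d j) ^ 2 * what i / what j)) / 2 := fun i j => by ring
      simp only [e1]
      simp only [← Finset.sum_div]
      simp only [Finset.sum_add_distrib]
      rw [hswap]
      ring
    have hnn : ∀ i j : Fin K, 0 ≤ |V i j| * ((d i) ^ 2 * what j / what i) := by
      intro i j
      have := (hwhat i).le
      have := (hwhat j).le
      positivity
    have hΩform : d ⬝ᵥ Ω.mulVec d = 2 * ∑ i, ∑ j, |V i j| * ((d i) ^ 2 * what j / what i) := by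
      rw [hΩ]
      simp only [dotProduct, mulVec_diagonal]
      rw [Finset.mul_sum]
      refine Finset.sum_congr rfl fun i _ => ?_
      simp only [mulVec, dotProduct]
      rw [← Finset.sum_add_distrib]
      have : ∑ j, (Vp i j * what j + Vm i j * what j) = ∑ j, |V i j| * what j := by
        refine Finset.sum_congr rfl fun j _ => ?_
        rw [← habs i j]; ring
      rw [this, Finset.sum_div, Finset.mul_sum, Finset.sum_mul, Finset.mul_sum, Finset.mul_sum]
      refine Finset.sum_congr rfl fun j _ => ?_
      field_simp
    have hS_nonneg : 0 ≤ ∑ i, ∑ j, |V i j| * ((d i) ^ 2 * what j / what i) :=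
      Finset.sum_nonneg fun i _ => Finset.sum_nonneg fun j _ => hnn i j
    calc d ⬝ᵥ V.mulVec d ≤ _ := hstep1
      _ = ∑ i, ∑ j, |V i j| * ((d i) ^ 2 * what j / what i) := hstep2
      _ ≤ 2 * ∑ i, ∑ j, |V i j| * ((d i) ^ 2 * what j / what i) := by linarith
      _ = d ⬝ᵥ Ω.mulVec d := hΩform.symm
  linarith
end

section
/- Let s = Σ_k w_k h_k and ŝ = Σ_k ŵ_k h_k with w_k, ŵ_k, h_k > 0. Then for any x > 0, the convex part x/y of the IS divergence admits the Jensen-type separable majorization x/(Σ_k w_k h_k) ≤ Σ_k (ŵ_k h_k/ŝ)² · x/(w_k h_k), with equality when w = ŵ. -/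
theorem stmt_16 (K : ℕ) (x : ℝ) (hx : 0 < x)
    (w what h : Fin K → ℝ)
    (hw : ∀ k, 0 < w k) (hwhat : ∀ k, 0 < what k) (hh : ∀ k, 0 < h k) :
    (x / (∑ k, w k * h k) ≤
      ∑ k, (what k * h k / (∑ k, what k * h k)) ^ 2 * (x / (w k * h k))) ∧
    (w = what →
      x / (∑ k, w k * h k) =
        ∑ k, (what k * h k / (∑ k, what k * h k)) ^ 2 * (x / (w k * h k))) := by
  rcases Nat.eq_zero_or_pos K with hK | hK
  · subst hK; simp
  have hne : (Finset.univ : Finset (Fin K)).Nonempty := ⟨⟨0, hK⟩, Finset.mem_univ _⟩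
  set s := ∑ k, w k * h k with hs
  set t := ∑ k, what k * h k with ht
  have hspos : 0 < s := Finset.sum_pos (fun k _ => mul_pos (hw k) (hh k)) hne
  have htpos : 0 < t := Finset.sum_pos (fun k _ => mul_pos (hwhat k) (hh k)) hne
  have hwh : ∀ k, 0 < w k * h k := fun k => mul_pos (hw k) (hh k)
  have main : ∀ a : Fin K → ℝ, (∀ k, 0 < a k) →
      1 ≤ s * ∑ k, (a k / t)^2 / (w k * h k) → True := fun _ _ _ => trivial
  have key := Finset.sum_mul_sq_le_sq_mul_sq Finset.univ
      (fun k => Real.sqrt (w k * h k))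
      (fun k => (what k * h k / t) / Real.sqrt (w k * h k))
  have h1 : ∀ k : Fin K, Real.sqrt (w k * h k) * ((what k * h k / t) / Real.sqrt (w k * h k))
      = what k * h k / t := by
    intro k
    rw [mul_div_cancel₀]
    exact (Real.sqrt_pos.mpr (hwh k)).ne'
  have h2 : ∀ k : Fin K, (Real.sqrt (w k * h k))^2 = w k * h k := fun k =>
    Real.sq_sqrt (hwh k).le
  have h3 : ∀ k : Fin K, ((what k * h k / t) / Real.sqrt (w k * h k))^2
      = (what k * h k / t)^2 / (w k * h k) := by
    intro k
    rw [div_pow, h2]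
  simp only [h1, h2, h3] at key
  have hsum1 : ∑ k, what k * h k / t = 1 := by
    rw [← Finset.sum_div, ← ht, div_self htpos.ne']
  rw [hsum1, one_pow] at key
  -- key : 1 ≤ s * ∑ k, (what k * h k / t)^2 / (w k * h k)
  have hineq : x / s ≤ ∑ k, (what k * h k / t) ^ 2 * (x / (w k * h k)) := by
    have : ∑ k, (what k * h k / t) ^ 2 * (x / (w k * h k))
        = x * ∑ k, (what k * h k / t)^2 / (w k * h k) := by
      rw [Finset.mul_sum]
      exact Finset.sum_congr rfl fun k _ => by ring
    rw [this, div_le_iff₀ hspos]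
    calc x = x * 1 := by ring
    _ ≤ x * (s * ∑ k, (what k * h k / t)^2 / (w k * h k)) := by
        exact mul_le_mul_of_nonneg_left key hx.le
    _ = x * (∑ k, (what k * h k / t)^2 / (w k * h k)) * s := by ring
  refine ⟨hineq, ?_⟩
  intro hwe
  subst hwe
  have : ∀ k : Fin K, (w k * h k / t) ^ 2 * (x / (w k * h k)) = w k * h k * (x / t^2) := by
    intro k
    have h1 : (w k * h k) ≠ 0 := (hwh k).ne'
    have h2 : t ≠ 0 := htpos.ne'
    field_simp
  rw [Finset.sum_congr rfl fun k _ => this k, ← Finset.sum_mul, ← hs]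
  have hst : s = t := ht
  rw [hst]
  field_simp
end
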